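/- Let G be the directed path of length ℓ, with vertices v_0, v_1, …, v_ℓ and edges (v_i, v_{i+1}) for 0 ≤ i < ℓ. Then the associative spectrum of the graph algebra A(G) satisfies: s_n(A(G)) = t_ℓ(n) if n ≤ ℓ+1, and s_n(A(G)) = t_ℓ(n) + 1 if n ≥ ℓ+2, where t_h(n) denotes the number of DFS trees of size n of height at most h. -/

import Mathlib

/-!
The term operation of a bracketing `t` on the graph algebra of a digraph sends an assignment `f`
to `f x₁` if `f` is a homomorphism from the DFS tree of `t` into the digraph, and to `∞` otherwise.
The homomorphisms into the path `0 → 1 → ⋯ → ℓ` are exactly the shifts `i ↦ a + dᵢ` of the depth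
sequence `d` of `t`, so the term operation depends only on `d`, and depth sequences bounded by `ℓ`
give pairwise distinct operations (evaluate at `i ↦ dᵢ`). The depth sequences of bracketings are
the zag sequences, which are also the depth sequences of DFS trees and determine them. Zag
sequences exceeding `ℓ` exist exactly when `n ≥ ℓ + 2`, and all of them give the constant `∞`.
-/

namespace AssocSpec

/-- Bracketings of products `x₁ x₂ ⋯ xₙ` represented as binary trees whose
leaves, read from left to right, are the variables `x₁, …, xₙ`. -/
inductive BTree : Type
  | leaf : BTree
  | node : BTree → BTree → BTree

namespace BTree

/-- The size of a bracketing: its number of variables (leaves). -/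
def size : BTree → ℕ
  | leaf => 1
  | node l r => l.size + r.size

/-- Evaluate a bracketing in a magma `(A, op)`, the leaves taking the values
`f k, f (k+1), …` from left to right. -/
def evalFrom {A : Type*} (op : A → A → A) : BTree → (ℕ → A) → ℕ → A
  | leaf, f, k => f k
  | node l r, f, k => op (evalFrom op l f k) (evalFrom op r f (k + l.size))

/-- The term operation induced by a bracketing `t` on a magma `(A, op)`;
the `i`-th variable (0-indexed) takes the value `f i`. -/
def termOp {A : Type*} (op : A → A → A) (t : BTree) (f : ℕ → A) : A :=
  evalFrom op t f 0

/-- The depth sequence of the DFS tree `G(t)` of a bracketing `t`: the `i`-th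
entry is the depth of the `i`-th variable (0-indexed) in `G(t)`. -/
def depths : BTree → List ℕ
  | leaf => [0]
  | node l r => l.depths ++ r.depths.map (· + 1)

/-- The depth of the `i`-th variable (0-indexed) in the DFS tree `G(t)`. -/
def depth (t : BTree) (i : ℕ) : ℕ := t.depths.getD i 0

/-- The height of the DFS tree `G(t)`: the maximum depth of a variable. -/
def height (t : BTree) : ℕ := t.depths.foldr max 0

/-- The edges of the DFS tree `G(t)`, the variables being indexed from the
given offset: `(p, c)` is an edge iff `x_p` is the parent of `x_c`. -/
def edgesFrom : BTree → ℕ → List (ℕ × ℕ)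
  | leaf, _ => []
  | node l r, k => (k, k + l.size) :: (l.edgesFrom k ++ r.edgesFrom (k + l.size))

/-- The edges of the DFS tree `G(t)` (variables indexed from `0`). -/
def edges (t : BTree) : List (ℕ × ℕ) := t.edgesFrom 0

end BTree

open Classical in
/-- The operation of the graph algebra of the digraph with vertex set `V` and
edge relation `E`; `none` plays the role of `∞`. -/
noncomputable def gaOp {V : Type*} (E : V → V → Prop) :
    Option V → Option V → Option V
  | some x, some y => if E x y then some x else none
  | _, _ => none

/-- The magma `(A, op)` satisfies the bracketing identity `t ≈ t'`. -/
def Satisfies {A : Type*} (op : A → A → A) (t t' : BTree) : Prop :=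
  ∀ f : ℕ → A, BTree.termOp op t f = BTree.termOp op t' f

/-- The `n`-th member `s_n` of the associative spectrum of the magma `(A, op)`:
the number of distinct term operations induced by bracketings of size `n`. -/
noncomputable def spectrum {A : Type*} (op : A → A → A) (n : ℕ) : ℕ :=
  Set.ncard {g : (ℕ → A) → A | ∃ t : BTree, t.size = n ∧ g = BTree.termOp op t}

/-- Reachability (by a walk) in the digraph with edge relation `E`. -/
def Reach {V : Type*} (E : V → V → Prop) : V → V → Prop :=
  Relation.ReflTransGen E

/-- `u` and `v` lie in the same strongly connected component. -/
def SameSCC {V : Type*} (E : V → V → Prop) (u v : V) : Prop :=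
  Reach E u v ∧ Reach E v u

/-- The strongly connected component of `v`, as a set of vertices. -/
def scc {V : Type*} (E : V → V → Prop) (v : V) : Set V :=
  {u | SameSCC E u v}

/-- `v` lies in a nontrivial strongly connected component (one carrying at
least one edge), i.e. `v` lies on a closed walk of positive length. -/
def InNontrivialSCC {V : Type*} (E : V → V → Prop) (v : V) : Prop :=
  ∃ u, E v u ∧ Reach E u v

/-- The induced subgraph on the set `K` (with the edge relation `E`) is an
`m`-whirl: `K` is partitioned into blocks `B 0, …, B (m-1)` so that edges go
exactly from each block to the cyclically next one. -/
def IsWhirlOn {V : Type*} (E : V → V → Prop) (K : Set V) (m : ℕ) : Prop :=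
  ∃ B : ZMod m → Set V,
    (∀ i, (B i).Nonempty) ∧
    (∀ i, B i ⊆ K) ∧
    (∀ x ∈ K, ∃! i, x ∈ B i) ∧
    (∀ x ∈ K, ∀ y ∈ K, (E x y ↔ ∃ i, x ∈ B i ∧ y ∈ B (i + 1)))

/-- `p 0 → p 1 → ⋯ → p len` is a path (a walk with pairwise distinct
vertices) in the digraph with edge relation `E`. -/
def IsPath {V : Type*} (E : V → V → Prop) (len : ℕ) (p : ℕ → V) : Prop :=
  (∀ i < len, E (p i) (p (i + 1))) ∧
  (∀ i ≤ len, ∀ j ≤ len, p i = p j → i = j)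

/-- The walk `p 0 → ⋯ → p len` is pleasant: all its vertices belong to
trivial strongly connected components. -/
def IsPleasant {V : Type*} (E : V → V → Prop) (len : ℕ) (p : ℕ → V) : Prop :=
  ∀ i ≤ len, ¬ InNontrivialSCC E (p i)

/-- The connected component `K` (of an undirected graph) is complete
bipartite: it splits into two nonempty parts with edges exactly between
vertices of different parts. -/
def IsCompleteBipartiteOn {V : Type*} (E : V → V → Prop) (K : Set V) : Prop :=
  ∃ B1 B2 : Set V, B1.Nonempty ∧ B2.Nonempty ∧ B1 ∪ B2 = K ∧ B1 ∩ B2 = ∅ ∧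
    ∀ x ∈ K, ∀ y ∈ K, (E x y ↔ (x ∈ B1 ∧ y ∈ B2) ∨ (x ∈ B2 ∧ y ∈ B1))

/-- A DFS tree of size `n`: a rooted directed tree on the vertices
`x₁, …, xₙ` (here `Fin n`, the root being `0`), given by its parent function,
such that the parent of every non-root vertex precedes it and the vertex set
of the induced subtree rooted at any vertex `i` is an interval `[i, i']`.
(The parent of the root is, by convention, the root itself.) -/
structure DFSTree (n : ℕ) where
  parent : Fin n → Fin n
  parent_lt : ∀ i : Fin n, 0 < (i : ℕ) → (parent i : ℕ) < (i : ℕ)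
  parent_root : ∀ i : Fin n, (i : ℕ) = 0 → parent i = i
  interval : ∀ i j k : Fin n, i ≤ j → j ≤ k →
    (∃ a : ℕ, parent^[a] k = i) → (∃ a : ℕ, parent^[a] j = i)

/-- The depth of the vertex `i` in a DFS tree: the length of the path from
the root to `i`. -/
noncomputable def DFSTree.depth {n : ℕ} (T : DFSTree n) (i : Fin n) : ℕ :=
  sInf {k : ℕ | (T.parent^[k] i : ℕ) = 0}

/-- The height of a DFS tree: the maximum depth of a vertex. -/
noncomputable def DFSTree.height {n : ℕ} (T : DFSTree n) : ℕ :=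
  Finset.univ.sup fun i => T.depth i

/-- The vertex `i` is a leaf (childless vertex) of the DFS tree `T`. -/
def DFSTree.IsLeaf {n : ℕ} (T : DFSTree n) (i : Fin n) : Prop :=
  ∀ j : Fin n, T.parent j = i → j = i

/-- `t_h(n)`: the number of DFS trees of size `n` of height at most `h`. -/
noncomputable def tcount (h n : ℕ) : ℕ :=
  Nat.card {T : DFSTree n // T.height ≤ h}

/-- `d` is a zag sequence: `d₁ = 0`, `d₂ = 1`, and
`1 ≤ d_{i+1} ≤ d_i + 1` for all `i` (1-indexed as in the paper;
here `d : Fin n → ℕ` is 0-indexed). -/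
def IsZag {n : ℕ} (d : Fin n → ℕ) : Prop :=
  (∀ h : 0 < n, d ⟨0, h⟩ = 0) ∧
  (∀ h : 1 < n, d ⟨1, h⟩ = 1) ∧
  (∀ i : ℕ, ∀ h : i + 1 < n,
    1 ≤ d ⟨i + 1, h⟩ ∧ d ⟨i + 1, h⟩ ≤ d ⟨i, Nat.lt_of_succ_lt h⟩ + 1)

/-- `M(t,t')`: the largest `m` such that the depth sequences of the DFS trees
of the bracketings `t` and `t'` are congruent modulo `m`. -/
noncomputable def Mval (t t' : BTree) : ℕ :=
  sSup {m : ℕ | ∀ i < t.size, t.depth i ≡ t'.depth i [MOD m]}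

/-- A list version of `IsZag`, which matches the recursive structure of bracketings. -/
def ZagList (L : List ℕ) : Prop :=
  L.head? = some 0 ∧ L.IsChain (fun a b => 1 ≤ b ∧ b ≤ a + 1)

namespace ZagList

variable {L : List ℕ}

lemma getD_zero (hL : ZagList L) : L.getD 0 0 = 0 := by
  obtain ⟨h, -⟩ := hL
  cases L <;> simp_all

lemma getD_succ (hL : ZagList L) {i : ℕ} (hi : i + 1 < L.length) :
    1 ≤ L.getD (i + 1) 0 ∧ L.getD (i + 1) 0 ≤ L.getD i 0 + 1 := by
  rw [List.getD_eq_getElem _ _ hi, List.getD_eq_getElem _ _ (by omega)]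
  exact hL.2.getElem i hi

lemma getD_le (hL : ZagList L) (i : ℕ) : L.getD i 0 ≤ i := by
  induction i with
  | zero => rw [hL.getD_zero]
  | succ i ih =>
    by_cases hi : i + 1 < L.length
    · have := (hL.getD_succ hi).2
      omega
    · rw [List.getD_eq_default _ _ (by omega)]
      omega

lemma lt_length (hL : ZagList L) {x : ℕ} (hx : x ∈ L) : x < L.length := by
  obtain ⟨i, hi, rfl⟩ := List.mem_iff_getElem.mp hx
  have := hL.getD_le i
  rw [List.getD_eq_getElem _ _ hi] at this
  omega

end ZagList

lemma zagList_range {n : ℕ} (hn : 1 ≤ n) : ZagList (List.range n) := by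
  obtain ⟨m, rfl⟩ := Nat.exists_eq_add_of_le' hn
  refine ⟨by simp [List.range_succ_eq_map], ?_⟩
  rw [List.isChain_iff_getElem]
  intro i hi
  simp

namespace BTree

lemma one_le_size (t : BTree) : 1 ≤ t.size := by
  induction t with
  | leaf => exact le_rfl
  | node l r ihl ihr => simp only [size]; omega

lemma length_depths (t : BTree) : t.depths.length = t.size := by
  induction t with
  | leaf => rfl
  | node l r ihl ihr => simp [depths, size, ihl, ihr]

lemma depths_ne_nil (t : BTree) : t.depths ≠ [] :=
  List.ne_nil_of_length_pos (t.length_depths ▸ t.one_le_size)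

lemma zagList_depths (t : BTree) : ZagList t.depths := by
  induction t with
  | leaf => exact ⟨rfl, List.isChain_singleton _⟩
  | node l r ihl ihr =>
    obtain ⟨hl0, hl⟩ := ihl
    obtain ⟨hr0, hr⟩ := ihr
    refine ⟨by simp [depths, List.head?_append, hl0], ?_⟩
    rw [depths, List.isChain_append, List.isChain_map, List.head?_map, hr0]
    refine ⟨hl, hr.imp fun a b hab => by omega, ?_⟩
    simp

lemma depth_zero (t : BTree) : t.depth 0 = 0 :=
  t.zagList_depths.getD_zero

lemma depth_node_left (l r : BTree) {i : ℕ} (h : i < l.size) :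
    (node l r).depth i = l.depth i := by
  rw [depth, depth, depths, List.getD_append _ _ _ _ (by rwa [length_depths])]

lemma depth_node_right (l r : BTree) {i : ℕ} (h : i < r.size) :
    (node l r).depth (l.size + i) = r.depth i + 1 := by
  rw [depth, depth, depths, List.getD_append_right _ _ _ _ (by rw [length_depths]; omega),
    length_depths, Nat.add_sub_cancel_left, List.getD_eq_getElem _ _ (by simpa [length_depths]),
    List.getD_eq_getElem _ _ (by rwa [length_depths]), List.getElem_map]

def graft : BTree → ℕ → BTree
  | leaf, _ => node leaf leaf
  | node l r, v => if v ≤ 1 then node (node l r) leaf else node l (graft r (v - 1))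

lemma depths_graft (t : BTree) {v : ℕ} (h1 : 1 ≤ v) (h2 : v ≤ t.depths.getLastD 0 + 1) :
    (graft t v).depths = t.depths ++ [v] := by
  induction t generalizing v with
  | leaf =>
    obtain rfl : v = 1 := by simp [depths] at h2; omega
    rfl
  | node l r _ ihr =>
    rw [graft]
    split_ifs with hv
    · obtain rfl : v = 1 := by omega
      simp [depths]
    · have hlast : (node l r).depths.getLastD 0 = r.depths.getLastD 0 + 1 := by
        rw [depths, List.getLastD_eq_getLast?, List.getLastD_eq_getLast?, List.getLast?_append,
          List.getLast?_map]
        cases h : r.depths.getLast? <;> simp_all [List.getLast?_eq_none_iff, depths_ne_nil]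
      rw [depths, depths, ihr (by omega) (by omega)]
      simp [Nat.sub_add_cancel (by omega : 1 ≤ v)]

lemma exists_depths_eq {L : List ℕ} (hL : ZagList L) : ∃ t : BTree, t.depths = L := by
  induction L using List.reverseRecOn with
  | nil => simp [ZagList] at hL
  | append_singleton M v ih =>
    rcases eq_or_ne M [] with rfl | hM
    · obtain rfl : v = 0 := by simpa [ZagList] using hL.1
      exact ⟨leaf, rfl⟩
    obtain ⟨h0, hc⟩ := hL
    rw [List.isChain_append] at hc
    obtain ⟨x, hx⟩ := Option.ne_none_iff_exists'.mp (mt List.getLast?_eq_none_iff.mp hM)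
    have hxv := hc.2.2 x hx v rfl
    obtain ⟨t, rfl⟩ := ih ⟨by rwa [List.head?_append_of_ne_nil _ hM] at h0, hc.1⟩
    exact ⟨graft t v, depths_graft t hxv.1 (by simpa [List.getLastD_eq_getLast?, hx] using hxv.2)⟩

end BTree

section GraphAlgebra

variable {V : Type*} (E : V → V → Prop)

open Classical in
lemma gaOp_eq_ite (a b : Option V) :
    gaOp E a b = if ∃ x y, a = some x ∧ b = some y ∧ E x y then a else none := by
  cases a <;> cases b <;> simp [gaOp]

def IsEdgeHom (f : ℕ → Option V) (t : BTree) (k : ℕ) : Prop :=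
  ∀ p c, (p, c) ∈ t.edgesFrom k → ∃ x y, f p = some x ∧ f c = some y ∧ E x y

variable {E}

lemma isEdgeHom_node {f : ℕ → Option V} {l r : BTree} {k : ℕ} :
    IsEdgeHom E f (.node l r) k ↔
      (∃ x y, f k = some x ∧ f (k + l.size) = some y ∧ E x y) ∧
        IsEdgeHom E f l k ∧ IsEdgeHom E f r (k + l.size) := by
  simp [IsEdgeHom, BTree.edgesFrom, or_imp, forall_and]

open Classical in
lemma evalFrom_gaOp (f : ℕ → Option V) (t : BTree) (k : ℕ) :
    t.evalFrom (gaOp E) f k = if IsEdgeHom E f t k then f k else none := by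
  induction t generalizing k with
  | leaf => simp [BTree.evalFrom, IsEdgeHom, BTree.edgesFrom]
  | node l r ihl ihr =>
    rw [BTree.evalFrom, ihl, ihr, isEdgeHom_node, gaOp_eq_ite]
    by_cases hl : IsEdgeHom E f l k <;> by_cases hr : IsEdgeHom E f r (k + l.size) <;>
      simp [hl, hr]

end GraphAlgebra

lemma forall_lt_add_iff {P : ℕ → Prop} {a b : ℕ} :
    (∀ i < a + b, P i) ↔ (∀ i < a, P i) ∧ ∀ i < b, P (a + i) := by
  refine ⟨fun h => ⟨fun i hi => h i (by omega), fun i hi => h _ (by omega)⟩, ?_⟩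
  rintro ⟨ha, hb⟩ i hi
  by_cases hia : i < a
  · exact ha i hia
  · simpa [Nat.add_sub_cancel' (not_lt.mp hia)] using hb (i - a) (by omega)

section Path

variable {ℓ : ℕ}

lemma isEdgeHom_path_iff {f : ℕ → Option (Fin (ℓ + 1))} (t : BTree) {k a : ℕ}
    (ha : (f k).map Fin.val = some a) :
    IsEdgeHom (fun i j : Fin (ℓ + 1) => (j : ℕ) = (i : ℕ) + 1) f t k ↔
      ∀ i < t.size, (f (k + i)).map Fin.val = some (a + t.depth i) := by
  induction t generalizing k a with
  | leaf => simpa [IsEdgeHom, BTree.edgesFrom, BTree.size, BTree.depth, BTree.depths] using ha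
  | node l r ihl ihr =>
    have hleft : (∀ i < l.size, (f (k + i)).map Fin.val = some (a + (l.node r).depth i)) ↔
        ∀ i < l.size, (f (k + i)).map Fin.val = some (a + l.depth i) :=
      forall₂_congr fun i hi => by rw [BTree.depth_node_left l r hi]
    have hright : (∀ i < r.size,
          (f (k + (l.size + i))).map Fin.val = some (a + (l.node r).depth (l.size + i))) ↔
        ∀ i < r.size, (f (k + l.size + i)).map Fin.val = some (a + 1 + r.depth i) :=
      forall₂_congr fun i hi => by rw [BTree.depth_node_right l r hi]; ring_nf
    rw [isEdgeHom_node, BTree.size, forall_lt_add_iff, hleft, hright, ← ihl ha]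
    constructor
    · rintro ⟨⟨x, y, hx, hy, hxy⟩, hl, hr⟩
      have hy' : (f (k + l.size)).map Fin.val = some (a + 1) := by simp_all
      exact ⟨hl, (ihr hy').mp hr⟩
    · rintro ⟨hl, hr⟩
      have hy' : (f (k + l.size)).map Fin.val = some (a + 1) := by
        simpa [r.depth_zero] using hr 0 r.one_le_size
      obtain ⟨x, hx, rfl⟩ := Option.map_eq_some_iff.mp ha
      obtain ⟨y, hy, hxy⟩ := Option.map_eq_some_iff.mp hy'
      exact ⟨⟨x, y, hx, hy, hxy⟩, hl, (ihr hy').mpr hr⟩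

open Classical in
noncomputable def shiftOp (ℓ : ℕ) (L : List ℕ) (f : ℕ → Option (Fin (ℓ + 1))) :
    Option (Fin (ℓ + 1)) :=
  if ∃ a, ∀ i < L.length, (f i).map Fin.val = some (a + L.getD i 0) then f 0 else none

open Classical in
lemma termOp_path (t : BTree) :
    t.termOp (gaOp fun i j : Fin (ℓ + 1) => (j : ℕ) = (i : ℕ) + 1) = shiftOp ℓ t.depths := by
  funext f
  rw [BTree.termOp, evalFrom_gaOp, shiftOp, t.length_depths]
  cases hf : f 0 with
  | none => simp
  | some x =>
    have hhom := isEdgeHom_path_iff (f := f) t (k := 0) (a := x) (by simp [hf])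
    simp only [zero_add, BTree.depth] at hhom
    refine if_congr (hhom.trans ⟨fun h => ⟨x, h⟩, ?_⟩) rfl rfl
    rintro ⟨a, ha⟩
    have h0 := ha 0 t.one_le_size
    rw [hf, ← BTree.depth, t.depth_zero] at h0
    obtain rfl : (x : ℕ) = a := by simpa using h0
    exact ha

lemma getD_le_of_forall_le {L : List ℕ} (hL : ∀ x ∈ L, x ≤ ℓ) (i : ℕ) : L.getD i 0 ≤ ℓ := by
  rw [List.getD_eq_getElem?_getD]
  cases h : L[i]? with
  | none => simp
  | some x => exact hL x (List.mem_of_getElem? h)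

lemma val_ofNat_getD {L : List ℕ} (hL : ∀ x ∈ L, x ≤ ℓ) (i : ℕ) :
    (Fin.ofNat (ℓ + 1) (L.getD i 0) : ℕ) = L.getD i 0 :=
  Nat.mod_eq_of_lt (Nat.lt_succ_of_le (getD_le_of_forall_le hL i))

lemma shiftOp_getD {L : List ℕ} (hL : ∀ x ∈ L, x ≤ ℓ) :
    shiftOp ℓ L (fun i => some (Fin.ofNat (ℓ + 1) (L.getD i 0))) =
      some (Fin.ofNat (ℓ + 1) (L.getD 0 0)) :=
  if_pos ⟨0, fun i _ => by rw [Option.map_some, val_ofNat_getD hL, zero_add]⟩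

lemma shiftOp_ne_none {L : List ℕ} (hL : ∀ x ∈ L, x ≤ ℓ) : shiftOp ℓ L ≠ fun _ => none :=
  fun h => by simpa [h] using (shiftOp_getD hL).symm

lemma shiftOp_eq_none {L : List ℕ} {x : ℕ} (hx : x ∈ L) (hlt : ℓ < x) :
    shiftOp ℓ L = fun _ => none := by
  funext f
  refine if_neg ?_
  rintro ⟨a, ha⟩
  obtain ⟨i, hi, rfl⟩ := List.mem_iff_getElem.mp hx
  obtain ⟨y, -, hy⟩ := Option.map_eq_some_iff.mp (ha i hi)
  have := y.isLt
  rw [List.getD_eq_getElem _ _ hi] at hy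
  omega

lemma shiftOp_injOn (n : ℕ) :
    Set.InjOn (shiftOp ℓ) {L | L.length = n ∧ ZagList L ∧ ∀ x ∈ L, x ≤ ℓ} := by
  rintro L ⟨hlen, hzag, hbd⟩ L' ⟨hlen', hzag', -⟩ h
  have hL := shiftOp_getD hbd
  rw [h, shiftOp] at hL
  split_ifs at hL with hshift
  obtain ⟨a, ha⟩ := hshift
  have hcoe : ∀ i < n, L.getD i 0 = a + L'.getD i 0 := fun i hi => by
    simpa only [Option.map_some, val_ofNat_getD hbd, Option.some_inj] using ha i (by omega)
  have hn : 0 < n := hlen ▸ List.length_pos_of_ne_nil (by rintro rfl; simp [ZagList] at hzag)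
  have ha0 := hcoe 0 hn
  rw [hzag.getD_zero, hzag'.getD_zero] at ha0
  refine List.ext_getElem (by omega) fun i hi hi' => ?_
  have := hcoe i (by omega)
  rw [List.getD_eq_getElem _ _ hi, List.getD_eq_getElem _ _ hi'] at this
  omega

end Path

/-- In a DFS tree with depth sequence `L`, the parent of the `k`-th vertex is the last vertex
before it that lies one level higher. -/
def zagParent (L : List ℕ) (k : ℕ) : ℕ :=
  Nat.findGreatest (fun j => L.getD j 0 + 1 = L.getD k 0) (k - 1)

lemma zagParent_le (L : List ℕ) (k : ℕ) : zagParent L k ≤ k - 1 :=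
  Nat.findGreatest_le _

lemma zagParent_lt (L : List ℕ) {k : ℕ} (hk : 0 < k) : zagParent L k < k :=
  (zagParent_le L k).trans_lt (by omega)

lemma zagParent_zero (L : List ℕ) : zagParent L 0 = 0 :=
  Nat.le_zero.mp (zagParent_le L 0)

namespace DFSTree

variable {n : ℕ} (T : DFSTree n)

lemma exists_iterate_parent_eq_zero (i : Fin n) : ∃ k, (T.parent^[k] i : ℕ) = 0 := by
  induction i using WellFoundedLT.induction with
  | _ i ih =>
    by_cases hi : (i : ℕ) = 0
    · exact ⟨0, hi⟩
    · obtain ⟨k, hk⟩ := ih _ (T.parent_lt i (Nat.pos_of_ne_zero hi))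
      exact ⟨k + 1, by rwa [Function.iterate_succ_apply]⟩

lemma iterate_parent_depth (i : Fin n) : (T.parent^[T.depth i] i : ℕ) = 0 :=
  Nat.sInf_mem (T.exists_iterate_parent_eq_zero i)

lemma depth_le {i : Fin n} {k : ℕ} (h : (T.parent^[k] i : ℕ) = 0) : T.depth i ≤ k :=
  Nat.sInf_le h

lemma depth_eq_zero_iff (i : Fin n) : T.depth i = 0 ↔ (i : ℕ) = 0 := by
  refine ⟨fun h => by simpa [h] using T.iterate_parent_depth i, fun h => ?_⟩
  exact Nat.le_zero.mp (T.depth_le (by simpa using h))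

lemma depth_parent {i : Fin n} (hi : 0 < (i : ℕ)) : T.depth i = T.depth (T.parent i) + 1 := by
  obtain ⟨m, hm⟩ := Nat.exists_eq_succ_of_ne_zero (mt (T.depth_eq_zero_iff i).mp hi.ne')
  have hspec := T.iterate_parent_depth i
  rw [hm, Function.iterate_succ_apply] at hspec
  have hle : T.depth i ≤ T.depth (T.parent i) + 1 :=
    T.depth_le (by rw [Function.iterate_succ_apply]; exact T.iterate_parent_depth _)
  have := T.depth_le hspec
  omega

lemma depth_iterate_parent_le (a : ℕ) (i : Fin n) : T.depth (T.parent^[a] i) ≤ T.depth i := by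
  induction a generalizing i with
  | zero => rfl
  | succ a ih =>
    rw [Function.iterate_succ_apply]
    refine (ih _).trans ?_
    by_cases hi : (i : ℕ) = 0
    · rw [T.parent_root i hi]
    · rw [T.depth_parent (Nat.pos_of_ne_zero hi)]
      omega

lemma depth_lt_of_iterate_parent {a : ℕ} {i j : Fin n} (h : T.parent^[a] j = i) (hne : i ≠ j) :
    T.depth i < T.depth j := by
  cases a with
  | zero => exact absurd h.symm hne
  | succ a =>
    have hj : (j : ℕ) ≠ 0 := fun hj =>
      hne (by rw [← h, Function.iterate_fixed (T.parent_root j hj)])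
    rw [Function.iterate_succ_apply] at h
    have := T.depth_iterate_parent_le a (T.parent j)
    rw [h] at this
    rw [T.depth_parent (Nat.pos_of_ne_zero hj)]
    omega

lemma depth_parent_le_of_le {j k : Fin n} (h1 : T.parent k ≤ j) (h2 : j ≤ k) :
    T.depth (T.parent k) ≤ T.depth j := by
  obtain ⟨a, ha⟩ := T.interval _ j k h1 h2 ⟨1, rfl⟩
  exact ha ▸ T.depth_iterate_parent_le a j

lemma depth_succ_le {i : ℕ} (h : i + 1 < n) :
    T.depth ⟨i + 1, h⟩ ≤ T.depth ⟨i, by omega⟩ + 1 := by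
  have hpar := T.parent_lt ⟨i + 1, h⟩ i.succ_pos
  rw [T.depth_parent (Nat.succ_pos i)]
  have := T.depth_parent_le_of_le (j := ⟨i, by omega⟩) (k := ⟨i + 1, h⟩)
    (Fin.le_def.mpr (by simp at hpar ⊢; omega)) (Fin.le_def.mpr (by simp))
  omega

lemma zagList_ofFn_depth (hn : 0 < n) : ZagList (List.ofFn T.depth) := by
  refine ⟨?_, List.isChain_ofFn.mpr fun i hi => ⟨?_, T.depth_succ_le hi⟩⟩
  · obtain ⟨m, rfl⟩ := Nat.exists_eq_succ_of_ne_zero hn.ne'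
    simp [List.ofFn_succ, (T.depth_eq_zero_iff 0).mpr rfl]
  · exact Nat.one_le_iff_ne_zero.mpr (mt (T.depth_eq_zero_iff _).mp (by simp))

lemma height_le_iff {h : ℕ} : T.height ≤ h ↔ ∀ i, T.depth i ≤ h := by
  simp [height]

lemma getD_ofFn_depth {j : ℕ} (hj : j < n) : (List.ofFn T.depth).getD j 0 = T.depth ⟨j, hj⟩ := by
  rw [List.getD_eq_getElem _ _ (by simpa using hj), List.getElem_ofFn]

lemma parent_eq_zagParent (k : Fin n) : (T.parent k : ℕ) = zagParent (List.ofFn T.depth) k := by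
  rcases Nat.eq_zero_or_pos (k : ℕ) with hk | hk
  · rw [T.parent_root k hk, zagParent, hk, Nat.findGreatest_zero]
  have hpk := T.parent_lt k hk
  symm
  refine Nat.findGreatest_eq_iff.mpr ⟨by omega, fun _ => ?_, fun j h1 h2 hj => ?_⟩
  · rw [T.getD_ofFn_depth (T.parent k).isLt, T.getD_ofFn_depth k.isLt, T.depth_parent hk]
  · rw [T.getD_ofFn_depth (by omega), T.getD_ofFn_depth k.isLt, T.depth_parent hk] at hj
    obtain ⟨a, ha⟩ := T.interval _ ⟨j, by omega⟩ k (Fin.le_def.mpr h1.le)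
      (Fin.le_def.mpr (by simp; omega)) ⟨1, rfl⟩
    have := T.depth_lt_of_iterate_parent ha (fun h => by rw [Fin.ext_iff] at h; simp at h; omega)
    omega

lemma ext_of_depth {T T' : DFSTree n} (h : T.depth = T'.depth) : T = T' := by
  have hpar : T.parent = T'.parent :=
    funext fun k => Fin.ext (by rw [T.parent_eq_zagParent, T'.parent_eq_zagParent, h])
  cases T
  cases T'
  simpa using hpar

end DFSTree

namespace ZagList

variable {L : List ℕ} (hL : ZagList L)
include hL

lemma exists_getD_eq {i v : ℕ} (hi : i < L.length) (hv : v ≤ L.getD i 0) :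
    ∃ j ≤ i, L.getD j 0 = v := by
  induction i with
  | zero => exact ⟨0, le_rfl, by rw [hL.getD_zero] at hv ⊢; omega⟩
  | succ i ih =>
    by_cases hvi : v ≤ L.getD i 0
    · obtain ⟨j, hj, hjv⟩ := ih (by omega) hvi
      exact ⟨j, by omega, hjv⟩
    · exact ⟨i + 1, le_rfl, by have := (hL.getD_succ hi).2; omega⟩

lemma getD_zagParent {k : ℕ} (hk : 0 < k) (hkn : k < L.length) :
    L.getD (zagParent L k) 0 + 1 = L.getD k 0 := by
  obtain ⟨m, rfl⟩ := Nat.exists_eq_succ_of_ne_zero hk.ne'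
  obtain ⟨h1, h2⟩ := hL.getD_succ hkn
  obtain ⟨j, hj, hjv⟩ := hL.exists_getD_eq (i := m) (v := L.getD (m + 1) 0 - 1) (by omega)
    (by omega)
  exact Nat.findGreatest_spec (P := fun j => L.getD j 0 + 1 = L.getD (m + 1) 0) hj (by omega)

lemma getD_le_of_zagParent_lt {k j : ℕ} (hkn : k < L.length) (h1 : zagParent L k < j)
    (h2 : j < k) : L.getD k 0 ≤ L.getD j 0 := by
  induction h : k - 1 - j generalizing j with
  | zero =>
    obtain rfl : j = k - 1 := by omega
    have hstep := (hL.getD_succ (i := k - 1) (by omega)).2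
    have hne : L.getD (k - 1) 0 + 1 ≠ L.getD k 0 :=
      Nat.findGreatest_is_greatest (P := fun j => L.getD j 0 + 1 = L.getD k 0) h1 le_rfl
    rw [Nat.sub_add_cancel (by omega)] at hstep
    omega
  | succ m ih =>
    have hnext := ih (j := j + 1) (by omega) (by omega) (by omega)
    have hstep := (hL.getD_succ (i := j) (by omega)).2
    have hne : L.getD j 0 + 1 ≠ L.getD k 0 :=
      Nat.findGreatest_is_greatest (P := fun j => L.getD j 0 + 1 = L.getD k 0) h1 (by omega)
    omega

lemma lt_getD_of_iterate_zagParent {a k i : ℕ} (hkn : k < L.length)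
    (h : (zagParent L)^[a] k = i) : i ≤ k ∧ ∀ j, i < j → j ≤ k → L.getD i 0 < L.getD j 0 := by
  induction a generalizing k with
  | zero =>
    rw [Function.iterate_zero_apply] at h
    subst h
    exact ⟨le_rfl, fun j h1 h2 => by omega⟩
  | succ a ih =>
    rw [Function.iterate_succ_apply] at h
    rcases Nat.eq_zero_or_pos k with rfl | hk
    · rw [zagParent_zero, Function.iterate_fixed (zagParent_zero L)] at h
      subst h
      exact ⟨le_rfl, fun j h1 h2 => by omega⟩
    have hpk := zagParent_lt L hk
    obtain ⟨hip, H⟩ := ih (by omega) h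
    have hpar := hL.getD_zagParent hk hkn
    have hdip : L.getD i 0 ≤ L.getD (zagParent L k) 0 := by
      rcases hip.eq_or_lt with rfl | hlt
      · exact le_rfl
      · exact (H _ hlt le_rfl).le
    refine ⟨by omega, fun j hij hjk => ?_⟩
    by_cases hjp : j ≤ zagParent L k
    · exact H j hij hjp
    · rcases hjk.eq_or_lt with rfl | hjk'
      · omega
      · have := hL.getD_le_of_zagParent_lt hkn (by omega) hjk'
        omega

lemma exists_iterate_zagParent {k i : ℕ} (hkn : k < L.length) (hik : i ≤ k)
    (H : ∀ j, i < j → j ≤ k → L.getD i 0 < L.getD j 0) : ∃ a, (zagParent L)^[a] k = i := by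
  induction k using Nat.strong_induction_on with
  | _ k ihk =>
    rcases hik.eq_or_lt with rfl | hlt
    · exact ⟨0, rfl⟩
    have hk : 0 < k := by omega
    have hpk := zagParent_lt L hk
    have hip : i ≤ zagParent L k := by
      by_contra! hcon
      have := hL.getD_le_of_zagParent_lt hkn hcon hlt
      have := H k hlt le_rfl
      omega
    rcases hip.eq_or_lt with rfl | hip'
    · exact ⟨1, rfl⟩
    · obtain ⟨a, ha⟩ := ihk _ hpk (by omega) hip fun j h1 h2 => H j h1 (by omega)
      exact ⟨a + 1, by rwa [Function.iterate_succ_apply]⟩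

end ZagList

namespace DFSTree

def zagParentFin (L : List ℕ) (k : Fin L.length) : Fin L.length :=
  ⟨zagParent L k, (zagParent_le L k).trans_lt (by omega)⟩

lemma val_iterate_zagParentFin (L : List ℕ) (a : ℕ) (k : Fin L.length) :
    ((zagParentFin L)^[a] k : ℕ) = (zagParent L)^[a] k :=
  Function.Semiconj.iterate_right (f := Fin.val) (fun _ => rfl) a k

def ofZagList (L : List ℕ) (hL : ZagList L) : DFSTree L.length where
  parent := zagParentFin L
  parent_lt _ hk := zagParent_lt L hk
  parent_root _ hk := Fin.ext (by simp [zagParentFin, hk, zagParent_zero])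
  interval i j k hij hjk := by
    rintro ⟨a, ha⟩
    obtain ⟨-, H⟩ := hL.lt_getD_of_iterate_zagParent k.isLt
      ((val_iterate_zagParentFin L a k).symm.trans (congrArg _ ha))
    obtain ⟨a', ha'⟩ := hL.exists_iterate_zagParent j.isLt hij fun m h1 h2 => H m h1 (h2.trans hjk)
    exact ⟨a', Fin.ext ((val_iterate_zagParentFin L a' j).trans ha')⟩

lemma depth_ofZagList {L : List ℕ} (hL : ZagList L) (k : Fin L.length) :
    (ofZagList L hL).depth k = L.getD k 0 := by
  induction k using WellFoundedLT.induction with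
  | _ k ih =>
    rcases Nat.eq_zero_or_pos (k : ℕ) with hk | hk
    · rw [(depth_eq_zero_iff _ k).mpr hk, hk, hL.getD_zero]
    · rw [depth_parent _ hk, ih _ (zagParent_lt L hk)]
      exact hL.getD_zagParent hk k.isLt

end DFSTree

lemma tcount_eq_ncard (ℓ : ℕ) {n : ℕ} (hn : 0 < n) :
    tcount ℓ n = {L : List ℕ | L.length = n ∧ ZagList L ∧ ∀ x ∈ L, x ≤ ℓ}.ncard := by
  rw [tcount, ← Nat.card_coe_set_eq]
  refine Nat.card_congr (Equiv.ofBijective (fun T => ⟨List.ofFn T.1.depth, List.length_ofFn,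
    T.1.zagList_ofFn_depth hn, List.forall_mem_ofFn_iff.mpr (T.1.height_le_iff.mp T.2)⟩) ⟨?_, ?_⟩)
  · intro T T' h
    simp only [Subtype.mk.injEq, List.ofFn_inj] at h
    exact Subtype.ext (DFSTree.ext_of_depth h)
  · rintro ⟨L, rfl, hL, hbd⟩
    have hdepth : (DFSTree.ofZagList L hL).depth = fun k : Fin L.length => L[(k : ℕ)] :=
      funext fun k => by rw [DFSTree.depth_ofZagList, List.getD_eq_getElem]
    refine ⟨⟨DFSTree.ofZagList L hL, (DFSTree.height_le_iff _).mpr fun k => ?_⟩, ?_⟩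
    · exact hdepth ▸ hbd _ (List.getElem_mem _)
    · exact Subtype.ext (by simp only [hdepth, List.ofFn_getElem])

lemma finite_setOf_length_eq_forall_le (ℓ n : ℕ) :
    {L : List ℕ | L.length = n ∧ ∀ x ∈ L, x ≤ ℓ}.Finite := by
  refine ((List.finite_length_eq (Fin (ℓ + 1)) n).image (List.map Fin.val)).subset ?_
  rintro L ⟨rfl, hbd⟩
  refine ⟨L.map (Fin.ofNat (ℓ + 1)), List.length_map _, ?_⟩
  rw [List.map_map]
  exact (List.map_congr_left fun x hx => Nat.mod_eq_of_lt (Nat.lt_succ_of_le (hbd x hx))).trans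
    (List.map_id _)

section Path

variable (ℓ : ℕ)

lemma spectrum_path (n : ℕ) :
    spectrum (gaOp fun i j : Fin (ℓ + 1) => (j : ℕ) = (i : ℕ) + 1) n =
      (shiftOp ℓ '' {L | L.length = n ∧ ZagList L}).ncard := by
  rw [spectrum]
  congr 1
  ext g
  constructor
  · rintro ⟨t, rfl, rfl⟩
    exact ⟨t.depths, ⟨t.length_depths, t.zagList_depths⟩, (termOp_path t).symm⟩
  · rintro ⟨L, ⟨rfl, hL⟩, rfl⟩
    obtain ⟨t, rfl⟩ := BTree.exists_depths_eq hL
    exact ⟨t, t.length_depths.symm, (termOp_path t).symm⟩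

lemma image_shiftOp_of_lt {n : ℕ} (h : ℓ + 1 < n) :
    shiftOp ℓ '' {L | L.length = n ∧ ZagList L} =
      insert (fun _ => none) (shiftOp ℓ '' {L | L.length = n ∧ ZagList L ∧ ∀ x ∈ L, x ≤ ℓ}) := by
  ext g
  constructor
  · rintro ⟨L, ⟨hlen, hL⟩, rfl⟩
    by_cases hbd : ∀ x ∈ L, x ≤ ℓ
    · exact Or.inr ⟨L, ⟨hlen, hL, hbd⟩, rfl⟩
    · push Not at hbd
      obtain ⟨x, hx, hlt⟩ := hbd
      exact Or.inl (shiftOp_eq_none hx hlt)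
  · rintro (rfl | ⟨L, ⟨hlen, hL, -⟩, rfl⟩)
    · exact ⟨List.range n, ⟨List.length_range, zagList_range (by omega)⟩,
        shiftOp_eq_none (List.mem_range.mpr (Nat.sub_one_lt (by omega))) (by omega)⟩
    · exact ⟨L, ⟨hlen, hL⟩, rfl⟩

lemma spectrum_path_of_le {n : ℕ} (hn : 1 ≤ n) (h : n ≤ ℓ + 1) :
    spectrum (gaOp fun i j : Fin (ℓ + 1) => (j : ℕ) = (i : ℕ) + 1) n = tcount ℓ n := by
  have hbd : {L : List ℕ | L.length = n ∧ ZagList L} =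
      {L | L.length = n ∧ ZagList L ∧ ∀ x ∈ L, x ≤ ℓ} := by
    ext L
    refine ⟨fun ⟨hlen, hL⟩ => ⟨hlen, hL, fun x hx => ?_⟩, fun ⟨hlen, hL, _⟩ => ⟨hlen, hL⟩⟩
    have := hL.lt_length hx
    omega
  rw [spectrum_path, hbd, (shiftOp_injOn n).ncard_image, tcount_eq_ncard ℓ hn]

lemma spectrum_path_of_lt {n : ℕ} (h : ℓ + 1 < n) :
    spectrum (gaOp fun i j : Fin (ℓ + 1) => (j : ℕ) = (i : ℕ) + 1) n = tcount ℓ n + 1 := by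
  have hnone : (fun _ => none) ∉ shiftOp ℓ '' {L | L.length = n ∧ ZagList L ∧ ∀ x ∈ L, x ≤ ℓ} :=
    fun ⟨_, ⟨_, _, hbd⟩, hL⟩ => shiftOp_ne_none hbd hL
  have hfin : (shiftOp ℓ '' {L | L.length = n ∧ ZagList L ∧ ∀ x ∈ L, x ≤ ℓ}).Finite :=
    ((finite_setOf_length_eq_forall_le ℓ n).subset fun _ hL => ⟨hL.1, hL.2.2⟩).image _
  rw [spectrum_path, image_shiftOp_of_lt ℓ h, Set.ncard_insert_of_notMem hnone hfin,
    (shiftOp_injOn n).ncard_image, tcount_eq_ncard ℓ (by omega)]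

end Path

end AssocSpec

open AssocSpec in
/-- For the directed path `v₀ → v₁ → ⋯ → v_ℓ` of length `ℓ`,
the associative spectrum of the graph algebra is `s_n = t_ℓ(n)` for
`n ≤ ℓ + 1` and `s_n = t_ℓ(n) + 1` for `n ≥ ℓ + 2`, where `t_h(n)` is the
number of DFS trees of size `n` of height at most `h`. -/
theorem stmt4 (ℓ : ℕ) (n : ℕ) (hn : 1 ≤ n) :
    (n ≤ ℓ + 1 →
      spectrum (gaOp (fun i j : Fin (ℓ + 1) => (j : ℕ) = (i : ℕ) + 1)) n
        = tcount ℓ n) ∧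
    (ℓ + 2 ≤ n →
      spectrum (gaOp (fun i j : Fin (ℓ + 1) => (j : ℕ) = (i : ℕ) + 1)) n
        = tcount ℓ n + 1) :=
  ⟨spectrum_path_of_le ℓ hn, spectrum_path_of_lt ℓ⟩
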